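/- arXiv:1602.03518 — 3 statements merged into one kernel-verified Lean document; each statement's English description precedes it below -/
import Mathlib

section
/- Let f = f_{β,E} be a post-critically finite generalized β-transformation (so β is an algebraic number). If z ∈ ℂ is a Galois conjugate of β with |z| > 1, then Σ_{j=0}^∞ c_j z^{−j} = 0, where c_0 = 1 and c_j = s(j+1)·f^j(1) ∈ [−1,1] for j ≥ 1. In particular, z^{−1} belongs to 𝓖, the set of zeros of functions in the class 𝓕. -/
open Finset

/-- The index `k` such that `x ∈ I_k`, where `I_0 = [0, 1/β]`,
`I_k = (k/β, (k+1)/β]` for `1 ≤ k ≤ m-1` and `I_m = (m/β, 1]`. -/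
noncomputable def branchIdx (β x : ℝ) : ℕ := (⌈β * x⌉ - 1).toNat

/-- The generalized β-transformation `f_{β,E}`, where `E` records the signs of the branches. -/
noncomputable def gbeta (β : ℝ) (E : ℕ → ℤ) (x : ℝ) : ℝ :=
  if E (branchIdx β x) = 1 then β * x - branchIdx β x
  else -(β * x) + branchIdx β x + 1

/-- The sign `e(j)` of the branch containing `f^{j-1}(1)`. -/
noncomputable def esign (β : ℝ) (E : ℕ → ℤ) (j : ℕ) : ℤ :=
  E (branchIdx β ((gbeta β E)^[j - 1] 1))

/-- The cumulative sign `s(j)`, with `s(1) = 1` and `s(j+1) = e(j)·s(j)`. -/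
noncomputable def csign (β : ℝ) (E : ℕ → ℤ) (j : ℕ) : ℤ :=
  ∏ l ∈ Finset.Ico 1 j, esign β E l

/-- The digit `d(j)` of the (β,E)-expansion of 1. -/
noncomputable def digit (β : ℝ) (E : ℕ → ℤ) (j : ℕ) : ℕ :=
  if E (branchIdx β ((gbeta β E)^[j - 1] 1)) = 1
  then branchIdx β ((gbeta β E)^[j - 1] 1)
  else branchIdx β ((gbeta β E)^[j - 1] 1) + 1

/-- The signed orbit `c_j = s(j+1)·f^j(1)`, with `c_0 = 1`. -/
noncomputable def sorbit (β : ℝ) (E : ℕ → ℤ) (j : ℕ) : ℝ :=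
  (csign β E (j + 1) : ℝ) * (gbeta β E)^[j] 1

/-- The data `(m, β, E)` is valid for a generalized β-transformation:
`m ≥ 1`, `β ∈ (m, m+1]` and `E(0), …, E(m) ∈ {1, -1}`. -/
def IsGBetaValid (m : ℕ) (β : ℝ) (E : ℕ → ℤ) : Prop :=
  1 ≤ m ∧ (m : ℝ) < β ∧ β ≤ m + 1 ∧ ∀ k ≤ m, E k = 1 ∨ E k = -1

/-- `f_{β,E}` is post-critically finite: the orbit of `1` is finite. -/
def IsPCF (β : ℝ) (E : ℕ → ℤ) : Prop :=
  Set.Finite {x : ℝ | ∃ j : ℕ, (gbeta β E)^[j] 1 = x}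

/-- `β > 1` is a generalized Parry number if some `f_{β,E}` is post-critically finite. -/
def IsGenParry (β : ℝ) : Prop :=
  1 < β ∧ ∃ (m : ℕ) (E : ℕ → ℤ), IsGBetaValid m β E ∧ IsPCF β E

/-- `z` is a Galois conjugate of `β`: a root of the minimal polynomial of `β` over `ℚ`
different from `β` itself. -/
def IsGaloisConj (z : ℂ) (β : ℝ) : Prop :=
  z ≠ (β : ℂ) ∧ Polynomial.aeval z (minpoly ℚ β) = 0

/-- `Ω`: the set of all Galois conjugates of all generalized Parry numbers. -/
def OmegaSet : Set ℂ := {z : ℂ | ∃ β : ℝ, IsGenParry β ∧ IsGaloisConj z β}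

/-- `𝓖`: the set of zeros in the open unit disk of functions
`T(w) = 1 + Σ_{j≥1} a_j w^j` with coefficients `a_j ∈ [-1,1]` (the class `𝓕`). -/
def mathcalG : Set ℂ :=
  {l : ℂ | ‖l‖ < 1 ∧ ∃ a : ℕ → ℝ, (∀ j : ℕ, a (j + 1) ∈ Set.Icc (-1 : ℝ) 1) ∧
    1 + ∑' j : ℕ, (a (j + 1) : ℂ) * l ^ (j + 1) = 0}

/-- The itinerary data `It(j)` associated to a finite sequence `(s(j), a(j))_{j=1}^n`. -/
def ItSeq (n : ℕ) (s : ℕ → ℤ) (a : ℕ → ℕ) (j : ℕ) : ℕ :=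
  if j = n then a n else if s (j + 1) = s j then a j else a j - 1

/-- The tail sum `R_j(x) = Σ_{i=j}^{n-1} s(i+1) a(i+1) x^{-i}`. -/
noncomputable def RSum (n : ℕ) (s : ℕ → ℤ) (a : ℕ → ℕ) (j : ℕ) (x : ℝ) : ℝ :=
  ∑ i ∈ Finset.Ico j n, (s (i + 1) : ℝ) * (a (i + 1) : ℝ) * x ^ (-(i : ℤ))

/-- `x ∈ I_k`, for the partition of `[0,1]` into
`I_0 = [0, 1/β]`, `I_k = (k/β, (k+1)/β]` for `1 ≤ k ≤ m-1`, `I_m = (m/β, 1]`. -/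
def memI (β : ℝ) (m k : ℕ) (x : ℝ) : Prop :=
  if k = 0 then x ∈ Set.Icc (0 : ℝ) (1 / β)
  else if k = m then x ∈ Set.Ioc ((m : ℝ) / β) 1
  else x ∈ Set.Ioc ((k : ℝ) / β) (((k : ℝ) + 1) / β)

/-!
Along the orbit of `1`, the signed orbit satisfies `c_{j+1} = β c_j - u_{j+1}` with integers
`u_j = s(j) d(j)`, so `c_n = G_n(β)` for the polynomials `G_0 = 1`, `G_{n+1} = X G_n - u_{n+1}`.
Post-critical finiteness makes the pair `(f^j(1), s(j+1))`, hence `c`, eventually periodic, i.e.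
`G_{n+p+q}(β) = G_{n+p}(β)`. These rational polynomial relations pass to the conjugate `z`, so
`G_n(z)` is eventually periodic and in particular bounded. Comparing the two recurrences, the
partial sums `S_N` of `Σ c_j z^{-j}` satisfy `S_{N+1} - (β/z) S_N = G_N(z) z^{-N} → 0`; hence
`(1 - β/z) S = 0`, and `S = 0` because `z ≠ β`.
-/

open Polynomial Function Filter Topology

lemma finite_range_of_periodic_tail {α : Type*} {x : ℕ → α} {p q : ℕ} (hq : 0 < q)
    (hper : Periodic (fun n => x (n + p)) q) : (Set.range x).Finite := by
  refine ((Finset.range (p + q)).finite_toSet.image x).subset ?_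
  rintro _ ⟨n, rfl⟩
  rcases lt_or_ge n p with hn | hn
  · exact ⟨n, Finset.mem_coe.mpr (Finset.mem_range.mpr (by omega)), rfl⟩
  · refine ⟨(n - p) % q + p, Finset.mem_coe.mpr (Finset.mem_range.mpr ?_), ?_⟩
    · have := Nat.mod_lt (n - p) hq
      omega
    · simpa [Nat.sub_add_cancel hn] using hper.map_mod_nat (n - p)

lemma Function.exists_periodic_iterate_of_finite_range {α : Type*} {F : α → α} {x : α}
    (h : (Set.range fun n => F^[n] x).Finite) :
    ∃ p q, 0 < q ∧ Periodic (fun n => F^[n + p] x) q := by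
  obtain ⟨a, b, hab, hba⟩ := Set.Finite.exists_lt_map_eq_of_forall_mem Set.mem_range_self h
  refine ⟨a, b - a, by omega, fun n => ?_⟩
  simp only at hba ⊢
  rw [show n + (b - a) + a = n + b by omega, iterate_add_apply, iterate_add_apply, hba]

theorem hasSum_mul_pow_eq_zero_of_recurrence {β w : ℂ} (hw : ‖w‖ < 1) (hβw : β * w ≠ 1)
    {c g u : ℕ → ℂ} (hc : Bornology.IsBounded (Set.range c))
    (hg : Bornology.IsBounded (Set.range g)) (h0 : c 0 = g 0)
    (hc_succ : ∀ n, c (n + 1) = β * c n - u (n + 1))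
    (hg_succ : ∀ n, g n = w * (g (n + 1) + u (n + 1))) :
    HasSum (fun n => c n * w ^ n) 0 := by
  obtain ⟨C, hC⟩ := isBounded_iff_forall_norm_le.mp hc
  obtain ⟨D, hD⟩ := isBounded_iff_forall_norm_le.mp hg
  have hsum : Summable (fun n => c n * w ^ n) := by
    refine .of_norm_bounded ((summable_geometric_of_lt_one (norm_nonneg w) hw).mul_left C)
      fun n => ?_
    rw [norm_mul, norm_pow]
    exact mul_le_mul_of_nonneg_right (hC _ ⟨n, rfl⟩) (by positivity)
  have htelescope : ∀ N, ∑ n ∈ range (N + 1), c n * w ^ n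
      - β * w * ∑ n ∈ range N, c n * w ^ n = g N * w ^ N := by
    intro N
    induction N with
    | zero => simp [h0]
    | succ N ih =>
      rw [sum_range_succ] at ih ⊢
      rw [sum_range_succ]
      linear_combination ih + w ^ (N + 1) * hc_succ N + w ^ N * hg_succ N
  have hg_lim : Tendsto (fun N => g N * w ^ N) atTop (𝓝 0) := by
    refine squeeze_zero_norm (fun N => ?_)
      (by simpa using (tendsto_pow_atTop_nhds_zero_of_lt_one (norm_nonneg w) hw).const_mul D)
    rw [norm_mul, norm_pow]
    exact mul_le_mul_of_nonneg_right (hD _ ⟨N, rfl⟩) (by positivity)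
  have hS_lim := hsum.hasSum.tendsto_sum_nat
  have hlim := ((hS_lim.comp (tendsto_add_atTop_nat 1)).sub (hS_lim.const_mul (β * w)))
  simp only [comp_apply, htelescope] at hlim
  have hS : (1 - β * w) * ∑' n, c n * w ^ n = 0 := by
    rw [sub_mul, one_mul]; exact tendsto_nhds_unique hlim hg_lim
  have : ∑' n, c n * w ^ n = 0 :=
    (mul_eq_zero.mp hS).resolve_left (sub_ne_zero.mpr (Ne.symm hβw))
  exact this ▸ hsum.hasSum

noncomputable def recurrencePoly (u : ℕ → ℤ) : ℕ → ℚ[X]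
  | 0 => 1
  | n + 1 => X * recurrencePoly u n - C (u (n + 1) : ℚ)

lemma aeval_recurrencePoly {A : Type*} [CommRing A] [Algebra ℚ A] (u : ℕ → ℤ) (a : A)
    {x : ℕ → A} (h0 : x 0 = 1) (hx : ∀ n, x (n + 1) = a * x n - u (n + 1)) (n : ℕ) :
    aeval a (recurrencePoly u n) = x n := by
  induction n with
  | zero => simp [recurrencePoly, h0]
  | succ n ih => simp [recurrencePoly, ih, hx]

lemma IsGaloisConj.aeval_eq_zero {z : ℂ} {β : ℝ} (h : IsGaloisConj z β) {P : ℚ[X]}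
    (hP : aeval β P = 0) : aeval z P = 0 :=
  aeval_eq_zero_of_dvd_aeval_eq_zero (minpoly.dvd ℚ β hP) h.2

theorem hasSum_mul_inv_pow_eq_zero_of_isGaloisConj {β : ℝ} {z : ℂ} (hconj : IsGaloisConj z β)
    (hz : 1 < ‖z‖) {c : ℕ → ℝ} {u : ℕ → ℤ} {p q : ℕ} (hq : 0 < q)
    (hper : Periodic (fun n => c (n + p)) q) (hc0 : c 0 = 1)
    (hc_succ : ∀ n, c (n + 1) = β * c n - u (n + 1)) :
    HasSum (fun n => (c n : ℂ) * z⁻¹ ^ n) 0 := by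
  have hz0 : z ≠ 0 := norm_pos_iff.mp (one_pos.trans hz)
  have hc_eval := aeval_recurrencePoly u β hc0 hc_succ
  set g : ℕ → ℂ := fun n => aeval z (recurrencePoly u n) with hg
  have hg_per : Periodic (fun n => g (n + p)) q := fun n => by
    have hβ : aeval β (recurrencePoly u (n + q + p) - recurrencePoly u (n + p)) = 0 := by
      simp only [map_sub, hc_eval, sub_eq_zero]; exact hper n
    simpa [sub_eq_zero] using hconj.aeval_eq_zero hβ
  refine hasSum_mul_pow_eq_zero_of_recurrence (β := β) (c := fun n => (c n : ℂ)) (g := g)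
    (u := fun n => u n) ?_ ?_
    (finite_range_of_periodic_tail hq (hper.comp ((↑) : ℝ → ℂ))).isBounded
    (finite_range_of_periodic_tail hq hg_per).isBounded (by simp [hc0, hg, recurrencePoly])
    (fun n => by exact_mod_cast hc_succ n) (fun n => by simp [hg, recurrencePoly, hz0])
  · rw [norm_inv]; exact inv_lt_one_of_one_lt₀ hz
  · rw [Ne, mul_inv_eq_one₀ hz0]; exact fun h => hconj.1 h.symm

lemma mem_mathcalG_of_hasSum {w : ℂ} (hw : ‖w‖ < 1) {a : ℕ → ℝ}
    (ha : ∀ j, a (j + 1) ∈ Set.Icc (-1 : ℝ) 1) (ha0 : a 0 = 1)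
    (h : HasSum (fun n => (a n : ℂ) * w ^ n) 0) : w ∈ mathcalG := by
  refine ⟨hw, a, ha, ?_⟩
  have := ((hasSum_nat_add_iff' 1).mpr h).tsum_eq
  simp only [sum_range_one, ha0, pow_zero] at this
  rw [this]; push_cast; ring

section Dynamics

variable {m : ℕ} {β : ℝ} {E : ℕ → ℤ}

lemma IsGBetaValid.pos (hv : IsGBetaValid m β E) : 0 < β := by
  have : (1 : ℝ) ≤ m := by exact_mod_cast hv.1
  linarith [hv.2.1]

lemma branchIdx_le (hv : IsGBetaValid m β E) {x : ℝ} (hx : x ∈ Set.Icc (0 : ℝ) 1) :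
    branchIdx β x ≤ m := by
  have : ⌈β * x⌉ ≤ (m : ℤ) + 1 := by
    rw [Int.ceil_le]; push_cast
    nlinarith [hv.2.2.1, hv.pos, hx.1, hx.2]
  unfold branchIdx; omega

lemma branchIdx_le_mul_le (hβ : 0 ≤ β) {x : ℝ} (hx : 0 ≤ x) :
    (branchIdx β x : ℝ) ≤ β * x ∧ β * x ≤ branchIdx β x + 1 := by
  have hk : ((branchIdx β x : ℤ) : ℝ) = max ((⌈β * x⌉ : ℝ) - 1) 0 := by
    rw [branchIdx, Int.toNat_eq_max]; push_cast; rfl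
  push_cast at hk
  rw [hk]
  exact ⟨max_le (by linarith [Int.ceil_lt_add_one (β * x)]) (mul_nonneg hβ hx),
    by linarith [le_max_left ((⌈β * x⌉ : ℝ) - 1) 0, Int.le_ceil (β * x)]⟩

lemma gbeta_mem_Icc (hβ : 0 ≤ β) {x : ℝ} (hx : 0 ≤ x) : gbeta β E x ∈ Set.Icc (0 : ℝ) 1 := by
  obtain ⟨hlo, hhi⟩ := branchIdx_le_mul_le hβ hx
  unfold gbeta
  split_ifs <;> constructor <;> linarith

lemma E_mul_gbeta {x : ℝ} (hE : E (branchIdx β x) = 1 ∨ E (branchIdx β x) = -1) :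
    (E (branchIdx β x) : ℝ) * gbeta β E x = β * x -
      ((if E (branchIdx β x) = 1 then branchIdx β x else branchIdx β x + 1 : ℕ) : ℝ) := by
  rcases hE with h | h
  · simp [gbeta, h]
  · simp only [gbeta, h, Int.reduceEq, if_false, Int.cast_neg, Int.cast_one, Nat.cast_add,
      Nat.cast_one]
    ring

lemma E_branchIdx_eq_one_or (hv : IsGBetaValid m β E) {x : ℝ} (hx : x ∈ Set.Icc (0 : ℝ) 1) :
    E (branchIdx β x) = 1 ∨ E (branchIdx β x) = -1 :=
  hv.2.2.2 _ (branchIdx_le hv hx)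

lemma iterate_gbeta_mem_Icc (hβ : 0 ≤ β) (j : ℕ) : (gbeta β E)^[j] 1 ∈ Set.Icc (0 : ℝ) 1 := by
  induction j with
  | zero => simp
  | succ j ih =>
    rw [iterate_succ_apply']
    exact gbeta_mem_Icc hβ ih.1

lemma esign_succ (j : ℕ) : esign β E (j + 1) = E (branchIdx β ((gbeta β E)^[j] 1)) := rfl

lemma csign_add_two (j : ℕ) : csign β E (j + 2) = csign β E (j + 1) * esign β E (j + 1) :=
  Finset.prod_Ico_succ_top (by omega) _

lemma csign_eq_one_or (hv : IsGBetaValid m β E) (j : ℕ) :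
    csign β E j = 1 ∨ csign β E j = -1 := by
  refine Int.isUnit_iff.mp (Finset.prod_induction _ IsUnit (fun _ _ => IsUnit.mul) isUnit_one
    fun l hl => Int.isUnit_iff.mpr ?_)
  obtain ⟨j, rfl⟩ : ∃ j, l = j + 1 := ⟨l - 1, by have := (Finset.mem_Ico.mp hl).1; omega⟩
  exact E_branchIdx_eq_one_or hv (iterate_gbeta_mem_Icc hv.pos.le j)

lemma sorbit_zero : sorbit β E 0 = 1 := by simp [sorbit, csign]

lemma sorbit_mem_Icc (hv : IsGBetaValid m β E) (j : ℕ) : sorbit β E j ∈ Set.Icc (-1 : ℝ) 1 := by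
  obtain ⟨hlo, hhi⟩ := iterate_gbeta_mem_Icc (E := E) hv.pos.le j
  rcases csign_eq_one_or hv (j + 1) with h | h <;>
    simp only [sorbit, h] <;> push_cast <;> constructor <;> linarith

noncomputable def signedDigit (β : ℝ) (E : ℕ → ℤ) (j : ℕ) : ℤ := csign β E j * digit β E j

lemma sorbit_succ (hv : IsGBetaValid m β E) (j : ℕ) :
    sorbit β E (j + 1) = β * sorbit β E j - signedDigit β E (j + 1) := by
  have h := E_mul_gbeta (E_branchIdx_eq_one_or hv (iterate_gbeta_mem_Icc (E := E) hv.pos.le j))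
  simp only [sorbit, signedDigit, digit, csign_add_two, esign_succ,
    iterate_succ_apply', Nat.add_sub_cancel]
  rw [Int.cast_mul, Int.cast_mul, Int.cast_natCast, mul_assoc, h]
  ring

noncomputable def signedStep (β : ℝ) (E : ℕ → ℤ) (xs : ℝ × ℤ) : ℝ × ℤ :=
  (gbeta β E xs.1, xs.2 * E (branchIdx β xs.1))

lemma signedStep_iterate (j : ℕ) :
    (signedStep β E)^[j] (1, 1) = ((gbeta β E)^[j] 1, csign β E (j + 1)) := by
  induction j with
  | zero => simp [csign]
  | succ j ih => rw [iterate_succ_apply', ih, signedStep, csign_add_two, esign_succ,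
      iterate_succ_apply']

lemma sorbit_eventually_periodic (hv : IsGBetaValid m β E) (hpcf : IsPCF β E) :
    ∃ p q, 0 < q ∧ Periodic (fun n => sorbit β E (n + p)) q := by
  have hfin : (Set.range fun n => (signedStep β E)^[n] (1, 1)).Finite := by
    refine (hpcf.prod ({1, -1} : Set ℤ).toFinite).subset ?_
    rintro _ ⟨j, rfl⟩
    simp only [signedStep_iterate]
    exact ⟨⟨j, rfl⟩, csign_eq_one_or hv (j + 1)⟩
  obtain ⟨p, q, hq, hper⟩ := exists_periodic_iterate_of_finite_range hfin
  refine ⟨p, q, hq, fun n => ?_⟩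
  simpa [signedStep_iterate, sorbit] using congrArg (fun xs => (xs.2 : ℝ) * xs.1) (hper n)

end Dynamics

/-- If `f_{β,E}` is a post-critically finite generalized β-transformation and `z`
is a Galois conjugate of `β` with `|z| > 1`, then each `c_j ∈ [-1,1]`,
`Σ_{j=0}^∞ c_j z^{−j} = 0`, and `z⁻¹ ∈ 𝓖`. -/
theorem stmt4 (m : ℕ) (β : ℝ) (E : ℕ → ℤ) (hv : IsGBetaValid m β E) (hpcf : IsPCF β E)
    (z : ℂ) (hconj : IsGaloisConj z β) (hz : 1 < ‖z‖) :
    (∀ j : ℕ, sorbit β E j ∈ Set.Icc (-1 : ℝ) 1) ∧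
    (∑' j : ℕ, (sorbit β E j : ℂ) * z ^ (-(j : ℤ)) = 0) ∧
    z⁻¹ ∈ mathcalG := by
  obtain ⟨p, q, hq, hper⟩ := sorbit_eventually_periodic hv hpcf
  have hsum := hasSum_mul_inv_pow_eq_zero_of_isGaloisConj hconj hz hq hper (sorbit_zero (E := E))
    (sorbit_succ hv)
  have hzpow (j : ℕ) : z ^ (-(j : ℤ)) = z⁻¹ ^ j := by rw [zpow_neg, zpow_natCast, inv_pow]
  refine ⟨sorbit_mem_Icc hv, ?_, ?_⟩
  · simp_rw [hzpow]
    exact hsum.tsum_eq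
  · refine mem_mathcalG_of_hasSum ?_ (fun j => sorbit_mem_Icc hv (j + 1)) sorbit_zero hsum
    rw [norm_inv]
    exact inv_lt_one_of_one_lt₀ hz
end

section
/- Assume hypotheses (H1), (H2) and (H3) on the sequence (s(j), a(j)), let β ∈ (It(1), It(1)+1) satisfy β = Σ_{j=1}^n s(j)a(j)β^{1−j}, and let f = f_{β,E} with E as in (H2). Then for every k ∈ {1, …, n−1}: (i) f^{k−1}(1) ∈ I_{It(k)}, and (ii) f^{k−1}(1) = (1/β)·(a(k) + β^{k−1}·E(It(k))·|R_k(β)|). -/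
open Finset

/-!
Put `t_k = s(k+1) β^(k-1) R_k(β)`. The equation for `β` says `t_0 = 1`, and peeling the first
term off `R_{k-1}` gives `β t_{k-1} = a(k) + s(k) s(k+1) t_k`, with `t_n = 0`. Running this
backwards from `t_{n-1} = a(n)/β`, (H1) and (H3) keep every `t_k` with `k ≥ 1` in `(0, 1)`. So
`β t_{k-1}` lies strictly between `It(k)` and `It(k) + 1`, and by (H2) the branch there has sign
`s(k) s(k+1)`, which sends `t_{k-1}` to `t_k`. Hence `f^k(1) = t_k`, and `t_k = β^(k-1) |R_k(β)|`.
-/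

theorem mem_Ioo_of_mul_eq {β y t : ℝ} {d : ℕ} {σ : ℤ} (hσ : σ = 1 ∨ σ = -1 ∧ d ≠ 0)
    (hβ : (d : ℝ) + 1 ≤ β) (ht : t ∈ Set.Ioo 0 1) (hy : β * y = d + σ * t) :
    y ∈ Set.Ioo 0 1 := by
  obtain ⟨ht₀, ht₁⟩ := ht
  have hd₀ : (0 : ℝ) ≤ d := d.cast_nonneg
  have hβ₀ : 0 < β := by linarith
  have hbounds : 0 < β * y ∧ β * y < β * 1 := by
    rcases hσ with rfl | ⟨rfl, hd⟩
    · push_cast at hy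
      constructor <;> linarith
    · have hd₁ : (1 : ℝ) ≤ d := by exact_mod_cast Nat.one_le_iff_ne_zero.2 hd
      push_cast at hy
      constructor <;> linarith
  exact ⟨pos_of_mul_pos_right hbounds.1 hβ₀.le, lt_of_mul_lt_mul_left hbounds.2 hβ₀.le⟩

section Branches

variable {β x : ℝ} {E : ℕ → ℤ} {K : ℕ}

theorem branchIdx_eq_of_mem_Ioc (h₁ : (K : ℝ) < β * x) (h₂ : β * x ≤ K + 1) :
    branchIdx β x = K := by
  have hceil : ⌈β * x⌉ = (K : ℤ) + 1 := by
    rw [Int.ceil_eq_iff]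
    push_cast
    constructor <;> linarith
  simp [branchIdx, hceil]

theorem memI_of_mem_Ioc {m : ℕ} (hβ : 0 < β) (h₁ : (K : ℝ) < β * x) (h₂ : β * x ≤ K + 1)
    (hx : x ≤ 1) : memI β m K x := by
  have hlo : (K : ℝ) / β < x := by rw [div_lt_iff₀ hβ]; linarith
  have hhi : x ≤ ((K : ℝ) + 1) / β := by rw [le_div_iff₀ hβ]; linarith
  unfold memI
  split_ifs with hK hKm
  · subst hK
    simp only [CharP.cast_eq_zero, zero_div, zero_add] at hlo hhi
    exact ⟨hlo.le, hhi⟩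
  · subst hKm
    exact ⟨hlo, hx⟩
  · exact ⟨hlo, hhi⟩

/-- `hK` encodes `K = d` for `σ = 1` and `K = d - 1` for `σ = -1`. -/
theorem gbeta_eq_of_mul_eq {t : ℝ} {d : ℕ} {σ : ℤ} (hσ : σ = 1 ∨ σ = -1) (hE : E K = σ)
    (hK : (K : ℝ) + (1 - σ) / 2 = d) (ht : t ∈ Set.Ioo 0 1) (hx : β * x = d + σ * t) :
    (K : ℝ) < β * x ∧ β * x < K + 1 ∧ gbeta β E x = t := by
  obtain ⟨ht₀, ht₁⟩ := ht
  rcases hσ with rfl | rfl <;> push_cast at hK hx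
  all_goals
    have h₁ : (K : ℝ) < β * x := by linarith
    have h₂ : β * x < K + 1 := by linarith
    refine ⟨h₁, h₂, ?_⟩
    simp only [gbeta, branchIdx_eq_of_mem_Ioc h₁ h₂.le, hE]
    norm_num
    linarith

end Branches

section NormTail

variable {n : ℕ} {s : ℕ → ℤ} {a : ℕ → ℕ}

theorem sign_mul_succ_cases {j : ℕ} (hj : s j = 1 ∨ s j = -1)
    (hj' : s (j + 1) = 1 ∨ s (j + 1) = -1) (hzero : a j = 0 → s (j + 1) = s j) :
    s j * s (j + 1) = 1 ∨ s j * s (j + 1) = -1 ∧ a j ≠ 0 := by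
  rcases hj with h | h <;> rcases hj' with h' | h' <;> simp_all

theorem ItSeq_add_eq {j : ℕ} (hj : j ≠ n)
    (hσ : s j * s (j + 1) = 1 ∨ s j * s (j + 1) = -1 ∧ a j ≠ 0) :
    (ItSeq n s a j : ℝ) + (1 - (s j * s (j + 1) : ℤ)) / 2 = a j := by
  rcases hσ with h | ⟨h, ha⟩ <;> rw [h]
  · have hs : s (j + 1) = s j := by
      rcases Int.eq_one_or_neg_one_of_mul_eq_one h with h' | h' <;> rw [h'] at h ⊢ <;> omega
    simp [ItSeq, hj, hs]
  · have hs : s (j + 1) ≠ s j := by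
      intro hs
      nlinarith [hs ▸ h, sq_nonneg (s j)]
    simp only [ItSeq, hj, hs, if_false]
    rw [Nat.cast_sub (Nat.one_le_iff_ne_zero.2 ha)]
    push_cast
    ring

theorem RSum_eq_add_RSum_succ {k : ℕ} (x : ℝ) (hk : k < n) :
    RSum n s a k x = s (k + 1) * a (k + 1) * x ^ (-(k : ℤ)) + RSum n s a (k + 1) x :=
  Finset.sum_eq_sum_Ico_succ_bot hk _

theorem sum_Icc_eq_RSum_zero (x : ℝ) :
    ∑ j ∈ Icc 1 n, (s j : ℝ) * a j * x ^ (1 - (j : ℤ)) = RSum n s a 0 x := by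
  rw [← Finset.Ico_add_one_right_eq_Icc, Finset.sum_Ico_eq_sum_range, RSum, Finset.range_eq_Ico]
  refine Finset.sum_congr (by simp) fun i _ => ?_
  rw [add_comm 1 i]
  push_cast
  ring_nf

/-- `s(k+1) β^(k-1) R_k(β)`, which turns out to be the orbit point `f^k(1)`. -/
noncomputable def normTail (n : ℕ) (s : ℕ → ℤ) (a : ℕ → ℕ) (β : ℝ) (k : ℕ) : ℝ :=
  s (k + 1) * β ^ ((k : ℤ) - 1) * RSum n s a k β

variable {β : ℝ}

@[simp]
theorem normTail_self : normTail n s a β n = 0 := by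
  simp [normTail, RSum]

theorem normTail_zero (hβ : β ≠ 0) (hs₁ : s 1 = 1) (hfix : β = RSum n s a 0 β) :
    normTail n s a β 0 = 1 := by
  simp [normTail, hs₁, ← hfix, hβ]

theorem mul_normTail_pred (hβ : β ≠ 0) (hs : ∀ j, 1 ≤ j → j ≤ n → s j = 1 ∨ s j = -1)
    {j : ℕ} (hj₁ : 1 ≤ j) (hjn : j ≤ n) :
    β * normTail n s a β (j - 1) = a j + s j * s (j + 1) * normTail n s a β j := by
  obtain ⟨k, rfl⟩ : ∃ k, j = k + 1 := ⟨j - 1, by omega⟩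
  have hsq : ∀ i, 1 ≤ i → i ≤ n → (s i : ℝ) * s i = 1 := fun i h₁ h₂ => by
    rcases hs i h₁ h₂ with h | h <;> simp [h]
  have htail : (s (k + 2) : ℝ) * s (k + 2) * RSum n s a (k + 1) β = RSum n s a (k + 1) β := by
    rcases (show k + 1 < n ∨ k + 1 = n by omega) with h | h
    · rw [hsq _ (by omega) h, one_mul]
    · simp [h, RSum]
  simp only [normTail, Nat.add_sub_cancel, RSum_eq_add_RSum_succ β (show k < n by omega)]
  have hpow : β ^ (((k + 1 : ℕ) : ℤ) - 1) = β * β ^ ((k : ℤ) - 1) := by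
    push_cast
    rw [add_sub_cancel_right, ← zpow_one_add₀ hβ]
    ring_nf
  have hinv : β * β ^ ((k : ℤ) - 1) * β ^ (-(k : ℤ)) = 1 := by
    rw [← hpow]
    push_cast
    rw [add_sub_cancel_right, ← zpow_add₀ hβ, add_neg_cancel, zpow_zero]
  rw [hpow]
  linear_combination (a (k + 1) : ℝ) * hinv + (a (k + 1) : ℝ) * β * β ^ ((k : ℤ) - 1)
    * β ^ (-(k : ℤ)) * hsq (k + 1) hj₁ hjn - (s (k + 1) : ℝ) * β * β ^ ((k : ℤ) - 1) * htail

theorem normTail_eq_abs (hβ : 0 < β) {k : ℕ} (hk : 1 ≤ k)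
    (hs : s (k + 1) = 1 ∨ s (k + 1) = -1) (hpos : 0 < normTail n s a β k) :
    normTail n s a β k = β ^ (k - 1) * |RSum n s a k β| := by
  have habs : |(s (k + 1) : ℝ)| = 1 := by rcases hs with h | h <;> simp [h]
  have hpow : β ^ ((k : ℤ) - 1) = β ^ (k - 1) := by
    rw [← zpow_natCast, Nat.cast_sub hk, Nat.cast_one]
  rw [← abs_of_pos hpos, normTail, abs_mul, abs_mul, habs, one_mul, hpow,
    abs_of_pos (pow_pos hβ _)]

theorem normTail_mem_Ioo (hβ : 0 < β) (hs : ∀ j, 1 ≤ j → j ≤ n → s j = 1 ∨ s j = -1)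
    (hσ : ∀ j, 1 ≤ j → j ≤ n - 1 → s j * s (j + 1) = 1 ∨ s j * s (j + 1) = -1 ∧ a j ≠ 0)
    (han : a n ≠ 0) (ha : ∀ j, 2 ≤ j → j ≤ n → (a j : ℝ) + 1 ≤ β) :
    ∀ k, 1 ≤ k → k ≤ n - 1 → normTail n s a β k ∈ Set.Ioo 0 1 := by
  intro k hk₁ hkn
  induction hd : n - 1 - k generalizing k with
  | zero =>
    obtain rfl : k = n - 1 := by omega
    have hlast := mul_normTail_pred (a := a) hβ.ne' hs (j := n) (by omega) le_rfl
    rw [normTail_self, mul_zero, add_zero] at hlast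
    have han' : (1 : ℝ) ≤ a n := by exact_mod_cast Nat.one_le_iff_ne_zero.2 han
    have hanβ := ha n (by omega) le_rfl
    constructor <;> nlinarith
  | succ d ih =>
    have hnext := ih (k + 1) (by omega) (by omega) (by omega)
    have hrec := mul_normTail_pred (a := a) hβ.ne' hs (j := k + 1) (by omega) (by omega)
    rw [Nat.add_sub_cancel] at hrec
    exact mem_Ioo_of_mul_eq (by exact_mod_cast hσ (k + 1) (by omega) (by omega))
      (ha (k + 1) (by omega) (by omega)) hnext (by rw [hrec]; push_cast; ring)

variable {E : ℕ → ℤ}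

theorem gbeta_normTail_pred (hβ : 0 < β) (hs : ∀ j, 1 ≤ j → j ≤ n → s j = 1 ∨ s j = -1)
    (hσ : ∀ j, 1 ≤ j → j ≤ n - 1 → s j * s (j + 1) = 1 ∨ s j * s (j + 1) = -1 ∧ a j ≠ 0)
    (hE : ∀ j, 1 ≤ j → j ≤ n - 1 → E (ItSeq n s a j) = s j * s (j + 1))
    {j : ℕ} (hj₁ : 1 ≤ j) (hjn : j ≤ n - 1) (ht : normTail n s a β j ∈ Set.Ioo 0 1) :
    (ItSeq n s a j : ℝ) < β * normTail n s a β (j - 1) ∧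
      β * normTail n s a β (j - 1) < ItSeq n s a j + 1 ∧
      gbeta β E (normTail n s a β (j - 1)) = normTail n s a β j := by
  have hσj := hσ j hj₁ hjn
  refine gbeta_eq_of_mul_eq ?_ (hE j hj₁ hjn) (ItSeq_add_eq (by omega) hσj) ht ?_
  · rcases hσj with h | h
    exacts [Or.inl h, Or.inr h.1]
  · rw [mul_normTail_pred hβ.ne' hs hj₁ (by omega)]
    push_cast
    ring

theorem iterate_gbeta_one_eq_normTail (hβ : 0 < β)
    (hs : ∀ j, 1 ≤ j → j ≤ n → s j = 1 ∨ s j = -1)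
    (hσ : ∀ j, 1 ≤ j → j ≤ n - 1 → s j * s (j + 1) = 1 ∨ s j * s (j + 1) = -1 ∧ a j ≠ 0)
    (hE : ∀ j, 1 ≤ j → j ≤ n - 1 → E (ItSeq n s a j) = s j * s (j + 1))
    (hT₀ : normTail n s a β 0 = 1)
    (hT : ∀ k, 1 ≤ k → k ≤ n - 1 → normTail n s a β k ∈ Set.Ioo 0 1) :
    ∀ k ≤ n - 1, (gbeta β E)^[k] 1 = normTail n s a β k := by
  intro k hk
  induction k with
  | zero => exact hT₀.symm
  | succ k ih =>
    rw [Function.iterate_succ_apply', ih (by omega)]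
    exact (gbeta_normTail_pred hβ hs hσ hE (j := k + 1) (by omega) hk
      (hT _ (by omega) hk)).2.2

end NormTail

theorem stmt12_general (n : ℕ) (s : ℕ → ℤ) (a : ℕ → ℕ)
    (hs1 : s 1 = 1) (hs : ∀ j : ℕ, 1 ≤ j → j ≤ n → s j = 1 ∨ s j = -1) (han : a n ≠ 0)
    (H1 : ∀ j : ℕ, 2 ≤ j → j ≤ n → a j < ItSeq n s a 1)
    (H3 : ∀ j : ℕ, 1 ≤ j → j ≤ n - 1 → a j = 0 → s (j + 1) = s j)
    (E : ℕ → ℤ)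
    (H2 : ∀ j : ℕ, 1 ≤ j → j ≤ n - 1 → s (j + 1) = s j * E (ItSeq n s a j))
    (β : ℝ) (hβ : β ∈ Set.Ioo (ItSeq n s a 1 : ℝ) ((ItSeq n s a 1 : ℝ) + 1))
    (hfix : β = ∑ j ∈ Finset.Icc 1 n, (s j : ℝ) * (a j : ℝ) * β ^ (1 - (j : ℤ))) :
    ∀ k : ℕ, 1 ≤ k → k ≤ n - 1 →
      memI β (ItSeq n s a 1) (ItSeq n s a k) ((gbeta β E)^[k - 1] 1) ∧
      (gbeta β E)^[k - 1] 1
        = (1 / β) * ((a k : ℝ) + β ^ (k - 1) * (E (ItSeq n s a k) : ℝ) * |RSum n s a k β|) := by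
  have hβ₀ : 0 < β := (Nat.cast_nonneg _).trans_lt hβ.1
  have hσ : ∀ j, 1 ≤ j → j ≤ n - 1 → s j * s (j + 1) = 1 ∨ s j * s (j + 1) = -1 ∧ a j ≠ 0 :=
    fun j hj₁ hjn => sign_mul_succ_cases (hs j hj₁ (by omega)) (hs (j + 1) (by omega) (by omega))
      (H3 j hj₁ hjn)
  have hE : ∀ j, 1 ≤ j → j ≤ n - 1 → E (ItSeq n s a j) = s j * s (j + 1) := fun j hj₁ hjn => by
    rw [H2 j hj₁ hjn]
    rcases hs j hj₁ (by omega) with h | h <;> simp [h]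
  have ha : ∀ j, 2 ≤ j → j ≤ n → (a j : ℝ) + 1 ≤ β := fun j hj₂ hjn => by
    have : ((a j + 1 : ℕ) : ℝ) ≤ ItSeq n s a 1 := by exact_mod_cast H1 j hj₂ hjn
    push_cast at this
    linarith [hβ.1]
  have hT := normTail_mem_Ioo hβ₀ hs hσ han ha
  have hT₀ := normTail_zero hβ₀.ne' hs1 (hfix.trans (sum_Icc_eq_RSum_zero β))
  intro k hk₁ hkn
  obtain ⟨hlo, hhi, -⟩ := gbeta_normTail_pred (E := E) hβ₀ hs hσ hE hk₁ hkn (hT k hk₁ hkn)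
  have hle : normTail n s a β (k - 1) ≤ 1 := by
    rcases Nat.eq_zero_or_pos (k - 1) with h | h
    exacts [(h ▸ hT₀).le, (hT _ h (by omega)).2.le]
  rw [iterate_gbeta_one_eq_normTail hβ₀ hs hσ hE hT₀ hT (k - 1) (by omega)]
  refine ⟨memI_of_mem_Ioc hβ₀ hlo hhi.le hle, ?_⟩
  rw [hE k hk₁ hkn, Int.cast_mul, mul_comm (β ^ (k - 1)), mul_assoc,
    ← normTail_eq_abs hβ₀ hk₁ (hs (k + 1) (by omega) (by omega)) (hT k hk₁ hkn).1,
    ← mul_normTail_pred hβ₀.ne' hs hk₁ (by omega)]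
  field_simp

/-- Under (H1), (H2), (H3), with `β ∈ (It(1), It(1)+1)` satisfying
`β = Σ_{j=1}^n s(j)a(j)β^{1−j}` and `f = f_{β,E}`, for every `1 ≤ k ≤ n−1`:
(i) `f^{k−1}(1) ∈ I_{It(k)}`, and
(ii) `f^{k−1}(1) = (1/β)·(a(k) + β^{k−1}·E(It(k))·|R_k(β)|)`. -/
theorem stmt12 (n : ℕ) (hn : 2 ≤ n) (s : ℕ → ℤ) (a : ℕ → ℕ)
    (hs1 : s 1 = 1) (hs : ∀ j : ℕ, 1 ≤ j → j ≤ n → s j = 1 ∨ s j = -1) (han : a n ≠ 0)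
    (H1 : ∀ j : ℕ, 2 ≤ j → j ≤ n → a j < ItSeq n s a 1)
    (H3 : ∀ j : ℕ, 1 ≤ j → j ≤ n - 1 → a j = 0 → s (j + 1) = s j)
    (E : ℕ → ℤ) (hE : ∀ k ≤ ItSeq n s a 1, E k = 1 ∨ E k = -1)
    (H2 : ∀ j : ℕ, 1 ≤ j → j ≤ n - 1 → s (j + 1) = s j * E (ItSeq n s a j))
    (β : ℝ) (hβ : β ∈ Set.Ioo (ItSeq n s a 1 : ℝ) ((ItSeq n s a 1 : ℝ) + 1))
    (hfix : β = ∑ j ∈ Finset.Icc 1 n, (s j : ℝ) * (a j : ℝ) * β ^ (1 - (j : ℤ))) :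
    ∀ k : ℕ, 1 ≤ k → k ≤ n - 1 →
      memI β (ItSeq n s a 1) (ItSeq n s a k) ((gbeta β E)^[k - 1] 1) ∧
      (gbeta β E)^[k - 1] 1
        = (1 / β) * ((a k : ℝ) + β ^ (k - 1) * (E (ItSeq n s a k) : ℝ) * |RSum n s a k β|) :=
  stmt12_general n s a hs1 hs han H1 H3 E H2 β hβ hfix
end

section
/- Assume hypotheses (H1), (H2) and (H3) on the sequence (s(j), a(j)), let β ∈ (It(1), It(1)+1) satisfy β = Σ_{j=1}^n s(j)a(j)β^{1−j}, and let f = f_{β,E} with E as in (H2). Then f^{n−1}(1) = a(n)/β, the orbit {f^j(1) : j ≥ 0} is finite, and consequently β is a generalized Parry number. -/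
open Finset

/-!
Write `c_j = s(j+1) Σ_{i=j+1}^{n} s(i) a(i) β^{j-i}`. The equation for `β` says `c_0 = 1`, and
`c_{n-1} = a(n)/β`. Consecutive terms satisfy `β c_j = a(j+1) ± c_{j+1}`, the sign being `+` exactly
when `s(j+2) = s(j+1)`; by (H2) this is the sign `E(It(j+1))` of the branch of `f` on which
`β c_j` falls. Working down from `c_{n-1}`, (H1) keeps every `c_j` with `j ≥ 1` inside `(0, 1)`, so
`f(c_j) = c_{j+1}` and `f^{n-1}(1) = a(n)/β`. Since `β · a(n)/β` is an integer, the next iterate is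
`0` or `1`, and `f(0) ∈ {0, 1}` as well, so the orbit of `1` is eventually periodic.
-/

section Iterate

variable {α : Type*} {f : α → α}

theorem iterate_eq_of_forall_apply_eq {c : ℕ → α} {N : ℕ} (h : ∀ j < N, f (c j) = c (j + 1)) :
    f^[N] (c 0) = c N := by
  induction N with
  | zero => rfl
  | succ N ih =>
    rw [Function.iterate_succ_apply', ih fun j hj => h j (by omega), h N N.lt_succ_self]

theorem exists_lt_iterate_eq_of_iterate_eq {x : α} {i N : ℕ} (hi : i < N)
    (h : f^[N] x = f^[i] x) (j : ℕ) : ∃ k < N, f^[j] x = f^[k] x := by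
  induction j using Nat.strong_induction_on with
  | _ j ih =>
    by_cases hj : j < N
    · exact ⟨j, hj, rfl⟩
    obtain ⟨k, hk, hjk⟩ := ih (j - N + i) (by omega)
    refine ⟨k, hk, ?_⟩
    calc f^[j] x = f^[j - N] (f^[N] x) := by
          rw [← Function.iterate_add_apply, Nat.sub_add_cancel (by omega)]
      _ = f^[j - N + i] x := by rw [h, Function.iterate_add_apply]
      _ = f^[k] x := hjk

theorem finite_range_iterate_of_iterate_eq {x : α} {i N : ℕ} (hi : i < N)
    (h : f^[N] x = f^[i] x) : (Set.range fun j => f^[j] x).Finite :=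
  ((Set.finite_Iio N).image fun k => f^[k] x).subset <| by
    rintro _ ⟨j, rfl⟩
    obtain ⟨k, hk, hjk⟩ := exists_lt_iterate_eq_of_iterate_eq hi h j
    exact ⟨k, hk, hjk.symm⟩

end Iterate

section GBeta

variable {β x y : ℝ} {E : ℕ → ℤ} {d : ℕ}

theorem branchIdx_eq_of_mem_Ioc_s13 {k : ℕ} (h : β * x ∈ Set.Ioc (k : ℝ) (k + 1)) :
    branchIdx β x = k := by
  have hceil : ⌈β * x⌉ = (k : ℤ) + 1 := by
    rw [Int.ceil_eq_iff]
    push_cast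
    constructor <;> linarith [h.1, h.2]
  rw [branchIdx, hceil]
  omega

theorem branchIdx_eq_of_mul_eq_natCast {k : ℕ} (h : β * x = k) : branchIdx β x = k - 1 := by
  rw [branchIdx, h, Int.ceil_natCast]
  omega

theorem gbeta_eq_zero_or_one_of_mul_eq_natCast {k : ℕ} (h : β * x = k) :
    gbeta β E x = 0 ∨ gbeta β E x = 1 := by
  rw [gbeta, branchIdx_eq_of_mul_eq_natCast h, h]
  rcases k with _ | k
  · split_ifs <;> simp
  · split_ifs <;> simp

theorem isPCF_of_iterate_eq_zero_or_one {N : ℕ} (hN : 0 < N)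
    (h : (gbeta β E)^[N] 1 = 0 ∨ (gbeta β E)^[N] 1 = 1) : IsPCF β E := by
  rcases h with h | h
  · have hzero : gbeta β E 0 = 0 ∨ gbeta β E 0 = 1 :=
      gbeta_eq_zero_or_one_of_mul_eq_natCast (k := 0) (by simp)
    rcases hzero with h0 | h0
    · exact finite_range_iterate_of_iterate_eq N.lt_succ_self
        (by rw [Function.iterate_succ_apply', h, h0])
    · exact finite_range_iterate_of_iterate_eq N.succ_pos
        (by rw [Function.iterate_succ_apply', h, h0, Function.iterate_zero_apply])
  · exact finite_range_iterate_of_iterate_eq hN h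

/-- `β x = d + y` on an increasing branch of `f_{β,E}` (index `d`), or `β x = d - y` on a
decreasing one (index `d - 1`): `d` is the digit of `x`, and `y = f_{β,E}(x)` once `0 < y < 1`. -/
def DigitStep (β : ℝ) (E : ℕ → ℤ) (d : ℕ) (x y : ℝ) : Prop :=
  (E d = 1 ∧ β * x = d + y) ∨ (1 ≤ d ∧ E (d - 1) = -1 ∧ β * x = d - y)

theorem DigitStep.gbeta_eq (h : DigitStep β E d x y) (hy : y ∈ Set.Ioo 0 1) :
    gbeta β E x = y := by
  obtain ⟨hy0, hy1⟩ := hy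
  rcases h with ⟨hE, hx⟩ | ⟨hd, hE, hx⟩
  · have hidx : branchIdx β x = d :=
      branchIdx_eq_of_mem_Ioc_s13 (by rw [hx]; constructor <;> linarith)
    rw [gbeta, hidx, if_pos hE, hx]
    ring
  · have hidx : branchIdx β x = d - 1 :=
      branchIdx_eq_of_mem_Ioc_s13 (by rw [hx, Nat.cast_sub hd]; push_cast; constructor <;> linarith)
    rw [gbeta, hidx, hE, if_neg (by norm_num), hx, Nat.cast_sub hd]
    push_cast
    ring

theorem DigitStep.mem_Ioo (h : DigitStep β E d x y) (hdβ : (d : ℝ) + 1 ≤ β)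
    (hy : y ∈ Set.Ioo 0 1) : x ∈ Set.Ioo 0 1 := by
  obtain ⟨hy0, hy1⟩ := hy
  have hβ : 0 < β := by linarith [d.cast_nonneg (α := ℝ)]
  have hβx : 0 < β * x ∧ β * x < β := by
    rcases h with ⟨-, hx⟩ | ⟨hd, -, hx⟩
    · rw [hx]; constructor <;> linarith [d.cast_nonneg (α := ℝ)]
    · have : (1 : ℝ) ≤ d := by exact_mod_cast hd
      rw [hx]; constructor <;> linarith
  exact ⟨pos_of_mul_pos_right hβx.1 hβ.le, (mul_lt_iff_lt_one_right hβ).1 hβx.2⟩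

end GBeta

theorem intCast_mul_self_eq_one {z : ℤ} (hz : z = 1 ∨ z = -1) : (z : ℝ) * z = 1 := by
  exact_mod_cast Int.isUnit_mul_self (Int.isUnit_iff.2 hz)

section Expansion

variable {n : ℕ} {s : ℕ → ℤ} {a : ℕ → ℕ} {β : ℝ} {E : ℕ → ℤ}

noncomputable def tailSum (n : ℕ) (s : ℕ → ℤ) (a : ℕ → ℕ) (β : ℝ) (j : ℕ) : ℝ :=
  ∑ i ∈ Ico (j + 1) (n + 1), (s i : ℝ) * a i * β ^ ((j : ℤ) - i)

noncomputable def tailOrbit (n : ℕ) (s : ℕ → ℤ) (a : ℕ → ℕ) (β : ℝ) (j : ℕ) : ℝ :=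
  s (j + 1) * tailSum n s a β j

theorem mul_tailSum (hβ : β ≠ 0) {j : ℕ} (hj : j < n) :
    β * tailSum n s a β j = s (j + 1) * a (j + 1) + tailSum n s a β (j + 1) := by
  have hshift : β * tailSum n s a β j =
      ∑ i ∈ Ico (j + 1) (n + 1), (s i : ℝ) * a i * β ^ (((j + 1 : ℕ) : ℤ) - i) := by
    rw [tailSum, mul_sum]
    refine sum_congr rfl fun i _ => ?_
    rw [show ((j + 1 : ℕ) : ℤ) - i = 1 + ((j : ℤ) - i) by push_cast; ring, zpow_add₀ hβ, zpow_one]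
    ring
  rw [hshift, sum_eq_sum_Ico_succ_bot (by omega), sub_self, zpow_zero, mul_one, tailSum]

theorem tailSum_zero (hβ : β ≠ 0)
    (hfix : β = ∑ j ∈ Icc 1 n, (s j : ℝ) * (a j : ℝ) * β ^ (1 - (j : ℤ))) :
    tailSum n s a β 0 = 1 := by
  refine mul_left_cancel₀ hβ ?_
  rw [mul_one]
  conv_rhs => rw [hfix]
  rw [tailSum, mul_sum, ← Ico_add_one_right_eq_Icc]
  refine sum_congr rfl fun i _ => ?_
  rw [show (1 : ℤ) - i = 1 + (((0 : ℕ) : ℤ) - i) by push_cast; ring, zpow_add₀ hβ, zpow_one]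
  ring

theorem tailSum_pred (hn : 1 ≤ n) : tailSum n s a β (n - 1) = s n * a n / β := by
  rw [tailSum, Nat.sub_add_cancel hn, Ico_add_one_right_eq_Icc, Icc_self, sum_singleton,
    show ((n - 1 : ℕ) : ℤ) - n = -1 by omega, zpow_neg_one, div_eq_mul_inv]

theorem tailOrbit_zero (hβ : β ≠ 0) (hs1 : s 1 = 1)
    (hfix : β = ∑ j ∈ Icc 1 n, (s j : ℝ) * (a j : ℝ) * β ^ (1 - (j : ℤ))) :
    tailOrbit n s a β 0 = 1 := by
  rw [tailOrbit, tailSum_zero hβ hfix, zero_add, hs1]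
  norm_num

theorem tailOrbit_pred (hn : 1 ≤ n) (hsn : s n = 1 ∨ s n = -1) :
    tailOrbit n s a β (n - 1) = a n / β := by
  rw [tailOrbit, tailSum_pred hn, Nat.sub_add_cancel hn, mul_div_assoc', ← mul_assoc,
    intCast_mul_self_eq_one hsn, one_mul]

theorem digitStep_tailOrbit (hβ : β ≠ 0) (hs : ∀ j : ℕ, 1 ≤ j → j ≤ n → s j = 1 ∨ s j = -1)
    (H3 : ∀ j : ℕ, 1 ≤ j → j ≤ n - 1 → a j = 0 → s (j + 1) = s j)
    (H2 : ∀ j : ℕ, 1 ≤ j → j ≤ n - 1 → s (j + 1) = s j * E (ItSeq n s a j))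
    {j : ℕ} (hj : j + 1 < n) :
    DigitStep β E (a (j + 1)) (tailOrbit n s a β j) (tailOrbit n s a β (j + 1)) := by
  have hs₁ := hs (j + 1) (by omega) (by omega)
  have hs₂ := hs (j + 2) (by omega) (by omega)
  have hsq₁ : s (j + 1) * s (j + 1) = 1 := Int.isUnit_mul_self (Int.isUnit_iff.2 hs₁)
  have hrec : β * tailOrbit n s a β j =
      a (j + 1) + (s (j + 1) * s (j + 2) : ℤ) * tailOrbit n s a β (j + 1) := by
    rw [tailOrbit, tailOrbit]
    push_cast
    linear_combination (s (j + 1) : ℝ) * mul_tailSum hβ hj.le +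
      (a (j + 1) : ℝ) * intCast_mul_self_eq_one hs₁ -
      (s (j + 1) * tailSum n s a β (j + 1) : ℝ) * intCast_mul_self_eq_one hs₂
  have hE : E (ItSeq n s a (j + 1)) = s (j + 1) * s (j + 2) := by
    rw [H2 (j + 1) (by omega) (by omega), ← mul_assoc, hsq₁, one_mul]
  have hIt : j + 1 ≠ n := by omega
  by_cases hsame : s (j + 2) = s (j + 1)
  · left
    rw [ItSeq, if_neg hIt, if_pos hsame] at hE
    rw [hsame, hsq₁] at hE hrec
    exact ⟨hE, by rw [hrec]; push_cast; ring⟩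
  · right
    have ha : 1 ≤ a (j + 1) :=
      Nat.one_le_iff_ne_zero.2 fun h0 => hsame (H3 _ (by omega) (by omega) h0)
    have hflip : s (j + 1) * s (j + 2) = -1 := by
      rcases hs₁ with h₁ | h₁ <;> rcases hs₂ with h₂ | h₂ <;> rw [h₁, h₂] at hsame ⊢ <;>
        omega
    rw [ItSeq, if_neg hIt, if_neg hsame, hflip] at hE
    rw [hflip] at hrec
    exact ⟨ha, hE, by rw [hrec]; push_cast; ring⟩

theorem tailOrbit_mem_Ioo {m : ℕ} (hβm : (m : ℝ) < β)
    (hs : ∀ j : ℕ, 1 ≤ j → j ≤ n → s j = 1 ∨ s j = -1) (han : a n ≠ 0)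
    (H1 : ∀ j : ℕ, 2 ≤ j → j ≤ n → a j < m)
    (H3 : ∀ j : ℕ, 1 ≤ j → j ≤ n - 1 → a j = 0 → s (j + 1) = s j)
    (H2 : ∀ j : ℕ, 1 ≤ j → j ≤ n - 1 → s (j + 1) = s j * E (ItSeq n s a j))
    {j : ℕ} (hj : 1 ≤ j) (hjn : j ≤ n - 1) : tailOrbit n s a β j ∈ Set.Ioo 0 1 := by
  have hβ : 0 < β := m.cast_nonneg.trans_lt hβm
  have hdigit : ∀ i, 2 ≤ i → i ≤ n → (a i : ℝ) + 1 ≤ β := fun i hi hin =>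
    (by exact_mod_cast H1 i hi hin : (a i : ℝ) + 1 ≤ m).trans hβm.le
  refine Nat.decreasingInduction' (P := fun k => tailOrbit n s a β k ∈ Set.Ioo 0 1)
    (fun k hk hjk ih => ?_) hjn ?_
  · exact (digitStep_tailOrbit hβ.ne' hs H3 H2 (by omega)).mem_Ioo
      (hdigit (k + 1) (by omega) (by omega)) ih
  · rw [tailOrbit_pred (by omega) (hs n (by omega) le_rfl)]
    exact ⟨div_pos (by exact_mod_cast Nat.pos_of_ne_zero han) hβ,
      (div_lt_one hβ).2 (by linarith [hdigit n (by omega) le_rfl])⟩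

theorem iterate_gbeta_one {m : ℕ} (hn : 1 ≤ n) (hβm : (m : ℝ) < β) (hs1 : s 1 = 1)
    (hs : ∀ j : ℕ, 1 ≤ j → j ≤ n → s j = 1 ∨ s j = -1) (han : a n ≠ 0)
    (H1 : ∀ j : ℕ, 2 ≤ j → j ≤ n → a j < m)
    (H3 : ∀ j : ℕ, 1 ≤ j → j ≤ n - 1 → a j = 0 → s (j + 1) = s j)
    (H2 : ∀ j : ℕ, 1 ≤ j → j ≤ n - 1 → s (j + 1) = s j * E (ItSeq n s a j))
    (hfix : β = ∑ j ∈ Icc 1 n, (s j : ℝ) * (a j : ℝ) * β ^ (1 - (j : ℤ))) :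
    (gbeta β E)^[n - 1] 1 = a n / β := by
  have hβ : β ≠ 0 := (m.cast_nonneg.trans_lt hβm).ne'
  have h := iterate_eq_of_forall_apply_eq (f := gbeta β E) (c := tailOrbit n s a β)
    (N := n - 1) fun j hj => (digitStep_tailOrbit hβ hs H3 H2 (by omega)).gbeta_eq
      (tailOrbit_mem_Ioo hβm hs han H1 H3 H2 (by omega) (by omega))
  rwa [tailOrbit_zero hβ hs1 hfix, tailOrbit_pred hn (hs n hn le_rfl)] at h

end Expansion

/-- Under (H1), (H2), (H3), with `β ∈ (It(1), It(1)+1)` satisfying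
`β = Σ_{j=1}^n s(j)a(j)β^{1−j}` and `f = f_{β,E}`, one has `f^{n−1}(1) = a(n)/β`,
the orbit of `1` is finite, and `β` is a generalized Parry number. -/
theorem stmt13 (n : ℕ) (hn : 2 ≤ n) (s : ℕ → ℤ) (a : ℕ → ℕ)
    (hs1 : s 1 = 1) (hs : ∀ j : ℕ, 1 ≤ j → j ≤ n → s j = 1 ∨ s j = -1) (han : a n ≠ 0)
    (H1 : ∀ j : ℕ, 2 ≤ j → j ≤ n → a j < ItSeq n s a 1)
    (H3 : ∀ j : ℕ, 1 ≤ j → j ≤ n - 1 → a j = 0 → s (j + 1) = s j)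
    (E : ℕ → ℤ) (hE : ∀ k ≤ ItSeq n s a 1, E k = 1 ∨ E k = -1)
    (H2 : ∀ j : ℕ, 1 ≤ j → j ≤ n - 1 → s (j + 1) = s j * E (ItSeq n s a j))
    (β : ℝ) (hβ : β ∈ Set.Ioo (ItSeq n s a 1 : ℝ) ((ItSeq n s a 1 : ℝ) + 1))
    (hfix : β = ∑ j ∈ Finset.Icc 1 n, (s j : ℝ) * (a j : ℝ) * β ^ (1 - (j : ℤ))) :
    (gbeta β E)^[n - 1] 1 = (a n : ℝ) / β ∧ IsPCF β E ∧ IsGenParry β := by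
  have hm : 1 ≤ ItSeq n s a 1 := Nat.one_le_of_lt (H1 n hn le_rfl)
  have hβ1 : 1 < β := lt_of_le_of_lt (by exact_mod_cast hm) hβ.1
  have hiter := iterate_gbeta_one (by omega) hβ.1 hs1 hs han H1 H3 H2 hfix
  have hPCF : IsPCF β E := by
    refine isPCF_of_iterate_eq_zero_or_one (N := n) (by omega) ?_
    rw [← Nat.sub_add_cancel (by omega : 1 ≤ n), Function.iterate_succ_apply', hiter]
    exact gbeta_eq_zero_or_one_of_mul_eq_natCast (mul_div_cancel₀ _ (zero_lt_one.trans hβ1).ne')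
  exact ⟨hiter, hPCF, hβ1, _, E, ⟨hm, hβ.1, hβ.2.le, hE⟩, hPCF⟩
end
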